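/- For every integer n ≥ 1 and reals 0 < m < M, and for every finite set S of deterministic online search strategies with |S| ≤ n − 1, there exists a price sequence σ of length n with all prices in [m, M] such that every strategy A ∈ S satisfies profit(A, σ) < max_i σ i. (Hence any online algorithm with advice needs at least log₂ n advice bits to be optimal for online search, even knowing n.) -/

import Mathlib

/-- The maximum price of a price sequence of positive length. -/
noncomputable def maxPrice {n : ℕ} (hn : 0 < n) (σ : Fin n → ℝ) : ℝ :=
  Finset.univ.sup' ⟨⟨0, hn⟩, Finset.mem_univ _⟩ σ

/-- The profit of a deterministic online search strategy `A : List ℝ → Bool`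
on the price sequence `σ`: it accepts at the least index `k` such that `A`
applied to the prefix `[σ 0, …, σ k]` is `true`, obtaining `σ k`; if no such
index exists it must accept the last price `σ (n-1)`. -/
noncomputable def osProfit {n : ℕ} (hn : 0 < n) (A : List ℝ → Bool) (σ : Fin n → ℝ) : ℝ :=
  if h : ∃ k : Fin n, A ((List.ofFn σ).take ((k : ℕ) + 1)) = true then
    σ ((Finset.univ.filter (fun k : Fin n => A ((List.ofFn σ).take ((k : ℕ) + 1)) = true)).min'
      (h.imp fun k hk => Finset.mem_filter.mpr ⟨Finset.mem_univ _, hk⟩))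
  else σ ⟨n - 1, Nat.sub_lt hn one_pos⟩

/-! The adversary runs every strategy on a strictly increasing sequence `τ`, picks a day `j`
on which none of them stops (there are fewer strategies than days), and lets the prices
follow `τ` up to day `j` and then drop below `τ j`. A strategy sees the same prefixes as on
`τ` up to day `j`, so it either stops before `j`, at a price below `τ j`, or after `j`, at
the low price. -/

theorem Set.Infinite.exists_strictMono_fin {α : Type*} [LinearOrder α] {s : Set α}
    (hs : s.Infinite) (n : ℕ) : ∃ f : Fin n → α, StrictMono f ∧ ∀ i, f i ∈ s := by
  obtain ⟨t, hts, rfl⟩ := hs.exists_subset_card_eq n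
  exact ⟨t.orderEmbOfFin rfl, (t.orderEmbOfFin rfl).strictMono,
    fun i => hts (t.orderEmbOfFin_mem rfl i)⟩

theorem List.take_ofFn_eq_take_ofFn {α : Type*} {n : ℕ} {σ τ : Fin n → α} {i : ℕ}
    (h : ∀ k : Fin n, (k : ℕ) < i → σ k = τ k) :
    (List.ofFn σ).take i = (List.ofFn τ).take i := by
  apply List.ext_getElem (by simp)
  intro k hkσ _
  simp only [List.length_take, List.length_ofFn, lt_min_iff] at hkσ
  simpa only [List.getElem_take, List.getElem_ofFn] using h ⟨k, hkσ.2⟩ hkσ.1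

variable {n : ℕ} (hn : 0 < n) (A : List ℝ → Bool)

noncomputable def acceptTime (σ : Fin n → ℝ) : Fin n :=
  if h : ∃ k : Fin n, A ((List.ofFn σ).take ((k : ℕ) + 1)) = true then
    (Finset.univ.filter (fun k : Fin n => A ((List.ofFn σ).take ((k : ℕ) + 1)) = true)).min'
      (h.imp fun _ hk => Finset.mem_filter.mpr ⟨Finset.mem_univ _, hk⟩)
  else ⟨n - 1, Nat.sub_lt hn one_pos⟩

theorem osProfit_eq_apply_acceptTime (σ : Fin n → ℝ) :
    osProfit hn A σ = σ (acceptTime hn A σ) := by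
  unfold osProfit acceptTime
  split_ifs <;> rfl

theorem acceptTime_le_iff (σ : Fin n → ℝ) (j : Fin n) :
    acceptTime hn A σ ≤ j ↔
      (j : ℕ) = n - 1 ∨ ∃ k ≤ j, A ((List.ofFn σ).take ((k : ℕ) + 1)) = true := by
  unfold acceptTime
  split_ifs with h
  · set F := Finset.univ.filter (fun k : Fin n => A ((List.ofFn σ).take ((k : ℕ) + 1)) = true)
    have hF : F.Nonempty := h.imp fun k hk => Finset.mem_filter.mpr ⟨Finset.mem_univ _, hk⟩
    refine ⟨fun hle => Or.inr ⟨_, hle, (Finset.mem_filter.mp (F.min'_mem hF)).2⟩, ?_⟩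
    rintro (hlast | ⟨k, hkj, hk⟩)
    · exact Fin.le_def.mpr (hlast ▸ Nat.le_sub_one_of_lt (F.min' hF).isLt)
    · exact (F.min'_le k (Finset.mem_filter.mpr ⟨Finset.mem_univ _, hk⟩)).trans hkj
  · push Not at h
    simp only [Fin.le_def, h, Bool.false_eq_true, and_false, exists_false, or_false]
    omega

variable {hn A}

theorem acceptTime_le_iff_of_eqOn {σ τ : Fin n → ℝ} {j : Fin n} (h : ∀ i ≤ j, σ i = τ i)
    {i : Fin n} (hij : i ≤ j) : acceptTime hn A σ ≤ i ↔ acceptTime hn A τ ≤ i := by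
  have hprefix : ∀ k ≤ i, (List.ofFn σ).take ((k : ℕ) + 1) = (List.ofFn τ).take ((k : ℕ) + 1) :=
    fun k hki => List.take_ofFn_eq_take_ofFn fun l hl =>
      h l (Fin.le_def.mpr (by have := Fin.le_def.mp (hki.trans hij); omega))
  simp only [acceptTime_le_iff]
  exact or_congr_right ⟨fun ⟨k, hki, hk⟩ => ⟨k, hki, hprefix k hki ▸ hk⟩,
    fun ⟨k, hki, hk⟩ => ⟨k, hki, (hprefix k hki).symm ▸ hk⟩⟩

theorem acceptTime_eq_of_eqOn {σ τ : Fin n → ℝ} {j : Fin n} (h : ∀ i ≤ j, σ i = τ i)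
    (hτ : acceptTime hn A τ < j) : acceptTime hn A σ = acceptTime hn A τ := by
  have hστ : acceptTime hn A σ ≤ acceptTime hn A τ :=
    (acceptTime_le_iff_of_eqOn h hτ.le).mpr le_rfl
  exact le_antisymm hστ ((acceptTime_le_iff_of_eqOn h (hστ.trans hτ.le)).mp le_rfl)

theorem lt_acceptTime_of_eqOn {σ τ : Fin n → ℝ} {j : Fin n} (h : ∀ i ≤ j, σ i = τ i)
    (hτ : j < acceptTime hn A τ) : j < acceptTime hn A σ := by
  by_contra! hσ
  exact hτ.not_ge (((acceptTime_le_iff_of_eqOn h hσ).mp le_rfl).trans hσ)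

def dropAfter (τ : Fin n → ℝ) (j : Fin n) (c : ℝ) : Fin n → ℝ :=
  fun i => if i ≤ j then τ i else c

theorem osProfit_dropAfter_lt {τ : Fin n → ℝ} {j : Fin n} {c : ℝ} (hτ : StrictMono τ)
    (hc : c < τ j) (hj : acceptTime hn A τ ≠ j) : osProfit hn A (dropAfter τ j c) < τ j := by
  have heq : ∀ i ≤ j, dropAfter τ j c i = τ i := fun i hi => if_pos hi
  rw [osProfit_eq_apply_acceptTime]
  rcases hj.lt_or_gt with hlt | hgt
  · rw [acceptTime_eq_of_eqOn heq hlt, heq _ hlt.le]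
    exact hτ hlt
  · rw [dropAfter, if_neg (lt_acceptTime_of_eqOn heq hgt).not_ge]
    exact hc

theorem advice_lower_bound_for_optimality
    (n : ℕ) (hn : 0 < n) (m M : ℝ) (hmM : m < M)
    (S : Finset (List ℝ → Bool)) (hS : S.card ≤ n - 1) :
    ∃ σ : Fin n → ℝ, (∀ i, m ≤ σ i ∧ σ i ≤ M) ∧
      ∀ A ∈ S, osProfit hn A σ < maxPrice hn σ := by
  obtain ⟨τ, hτ, hτmem⟩ := (Set.Ioc_infinite hmM).exists_strictMono_fin n
  have hcard : (S.image (acceptTime hn · τ)).card < (Finset.univ : Finset (Fin n)).card := by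
    rw [Finset.card_univ, Fintype.card_fin]
    exact S.card_image_le.trans_lt (by omega)
  obtain ⟨j, -, hj⟩ := Finset.exists_mem_notMem_of_card_lt_card hcard
  refine ⟨dropAfter τ j m, fun i => ?_, fun A hA => ?_⟩
  · unfold dropAfter
    split_ifs
    exacts [⟨(hτmem i).1.le, (hτmem i).2⟩, ⟨le_rfl, hmM.le⟩]
  · calc osProfit hn A (dropAfter τ j m)
        < τ j :=
          osProfit_dropAfter_lt hτ (hτmem j).1 fun h => hj (Finset.mem_image.mpr ⟨A, hA, h⟩)
      _ = dropAfter τ j m j := (if_pos le_rfl).symm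
      _ ≤ maxPrice hn (dropAfter τ j m) := Finset.le_sup' _ (Finset.mem_univ j)
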